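/- Let 𝒫 be a partition of [n] = {1,…,n} with k parts, and let s := [Sym(n) : SStab_n(𝒫)] be the index of the setwise stabiliser of 𝒫 in Sym(n). Then s ≥ (1/(n+1))·C(n+1, k), where C(n+1,k) denotes the binomial coefficient; in particular s ≥ (1/(n+1))·C(n, k) and s ≥ (1/(n+1))·C(n, min{k, n−k}). -/

import Mathlib

/-!
The stabiliser of `𝒫` permutes the `k` parts, and the kernel of this action preserves every
part, so it embeds in `∏_{P ∈ 𝒫} Sym(P)`. Hence `|SStab(𝒫)| ≤ k! ∏ |P|! ≤ k! (n + 1 - k)!`,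
the last step by iterating `(a + 1)! (b + 1)! ≤ (a + b + 1)!` over the (nonempty) parts.
So the index `n! / |SStab(𝒫)|` is at least `n! / (k! (n + 1 - k)!) = C(n + 1, k) / (n + 1)`.
-/

open Equiv MulAction Nat Finset Pointwise

theorem Nat.factorial_succ_mul_factorial_succ_le (a b : ℕ) :
    (a + 1)! * (b + 1)! ≤ (a + b + 1)! :=
  calc (a + 1)! * (b + 1)! = (a + 1) * a ! * (b + 1)! := by rw [factorial_succ]
    _ ≤ (a + b + 1).choose a * a ! * (b + 1)! := by
        gcongr
        calc a + 1 = (a + 1).choose a := (choose_succ_self_right a).symm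
          _ ≤ (a + b + 1).choose a := choose_le_choose a (by omega)
    _ = (a + b + 1)! := by
        rw [mul_right_comm, show a + b + 1 = b + 1 + a by ring,
          add_choose_mul_factorial_mul_factorial]

theorem Finset.prod_factorial_succ_le {ι : Type*} (s : Finset ι) (f : ι → ℕ) :
    ∏ i ∈ s, (f i + 1)! ≤ (∑ i ∈ s, f i + 1)! := by
  classical
  induction s using Finset.induction_on with
  | empty => simp
  | insert a s ha ih =>
    rw [prod_insert ha, sum_insert ha]
    exact (Nat.mul_le_mul_left _ ih).trans (factorial_succ_mul_factorial_succ_le _ _)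

theorem DomMulAct.stabilizer_card_le_of_surjective {α ι : Type*} [Fintype α] [DecidableEq α]
    [Fintype ι] [DecidableEq ι] {f : α → ι} (hf : Function.Surjective f) :
    Fintype.card {g : Perm α // f ∘ g = f} ≤ (Fintype.card α + 1 - Fintype.card ι)! := by
  set c : ι → ℕ := fun i ↦ Fintype.card {a // f a = i}
  have hc : ∀ i, c i - 1 + 1 = c i := fun i ↦
    Nat.sub_add_cancel (Fintype.card_pos_iff.2 ⟨⟨_, (hf i).choose_spec⟩⟩)
  have hsum : ∑ i, (c i - 1) + Fintype.card ι = Fintype.card α := by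
    rw [← Fintype.card_congr (Equiv.sigmaFiberEquiv f), Fintype.card_sigma,
      Fintype.card_eq_sum_ones, ← sum_add_distrib]
    exact Finset.sum_congr rfl fun i _ ↦ hc i
  calc Fintype.card {g : Perm α // f ∘ g = f} = ∏ i, (c i - 1 + 1)! := by
        simp only [hc, c, DomMulAct.stabilizer_card]
    _ ≤ (∑ i, (c i - 1) + 1)! := prod_factorial_succ_le _ _
    _ = (Fintype.card α + 1 - Fintype.card ι)! := by congr 1; omega

namespace Setoid.IsPartition

variable {α : Type*} {C : Set (Set α)} (hC : IsPartition C)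

noncomputable def partOf (x : α) : C :=
  ⟨(hC.2 x).exists.choose, (hC.2 x).exists.choose_spec.1⟩

theorem mem_partOf (x : α) : x ∈ (hC.partOf x : Set α) :=
  (hC.2 x).exists.choose_spec.2

theorem partOf_eq {x : α} {P : Set α} (hP : P ∈ C) (hx : x ∈ P) : hC.partOf x = ⟨P, hP⟩ :=
  Subtype.ext ((hC.2 x).unique (hC.2 x).exists.choose_spec ⟨hP, hx⟩)

theorem partOf_surjective : Function.Surjective hC.partOf := by
  rintro ⟨P, hP⟩
  obtain ⟨x, hx⟩ := Set.nonempty_iff_ne_empty.2 (ne_of_mem_of_not_mem hP hC.1)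
  exact ⟨x, hC.partOf_eq hP hx⟩

theorem card_le [Finite α] (hC : IsPartition C) : Nat.card C ≤ Nat.card α :=
  Nat.card_le_card_of_surjective _ hC.partOf_surjective

theorem partOf_comp_eq {σ : Perm α} (hσ : ∀ P ∈ C, σ • P = P) :
    hC.partOf ∘ σ = hC.partOf := by
  funext x
  have hx := Set.smul_mem_smul_set (a := σ) (hC.mem_partOf x)
  rw [hσ _ (hC.partOf x).2] at hx
  exact hC.partOf_eq (hC.partOf x).2 hx

theorem card_stabilizer_le [Fintype α] (hC : IsPartition C) :
    Nat.card (stabilizer (Perm α) C) ≤ (Nat.card C)! * (Fintype.card α + 1 - Nat.card C)! := by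
  classical
  have := Fintype.ofFinite C
  let ρ := toPermHom (stabilizer (Perm α) C) C
  have hker : Nat.card ρ.ker ≤ Fintype.card {g : Perm α // hC.partOf ∘ g = hC.partOf} := by
    rw [← Nat.card_eq_fintype_card]
    refine Nat.card_le_card_of_injective
      (fun g ↦ ⟨g.1, hC.partOf_comp_eq fun P hP ↦ ?_⟩) fun g h hgh ↦ ?_
    · exact congrArg Subtype.val (Equiv.ext_iff.1 (ρ.mem_ker.1 g.2) ⟨P, hP⟩)
    · rw [Subtype.mk.injEq] at hgh
      exact Subtype.ext (Subtype.ext hgh)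
  have hrange : Nat.card ρ.range ≤ (Nat.card C)! :=
    Nat.card_perm (α := C) ▸ ρ.range.card_le_card_group
  calc Nat.card (stabilizer (Perm α) C) = Nat.card ρ.range * Nat.card ρ.ker := by
        rw [← ρ.ker.card_mul_index, Subgroup.index_ker ρ, mul_comm]
    _ ≤ (Nat.card C)! * (Fintype.card α + 1 - Nat.card C)! := by
        refine Nat.mul_le_mul hrange (hker.trans ?_)
        simpa only [Nat.card_eq_fintype_card] using
          DomMulAct.stabilizer_card_le_of_surjective hC.partOf_surjective

theorem choose_le_mul_index [Fintype α] (hC : IsPartition C) :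
    (Fintype.card α + 1).choose (Nat.card C) ≤
      (Fintype.card α + 1) * (stabilizer (Perm α) C).index := by
  have hkn : Nat.card C ≤ Fintype.card α := Nat.card_eq_fintype_card (α := α) ▸ hC.card_le
  set k := Nat.card C
  set n := Fintype.card α
  set G := stabilizer (Perm α) C
  have hindex : G.index * Nat.card G = n ! := by
    rw [Subgroup.index_mul_card, Nat.card_perm, Nat.card_eq_fintype_card]
  refine Nat.le_of_mul_le_mul_right ?_ (by positivity : 0 < k ! * (n + 1 - k)!)
  calc (n + 1).choose k * (k ! * (n + 1 - k)!) = (n + 1) * (G.index * Nat.card G) := by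
        rw [← mul_assoc, choose_mul_factorial_mul_factorial (by omega), hindex, factorial_succ]
    _ ≤ (n + 1) * G.index * (k ! * (n + 1 - k)!) := by
        rw [mul_assoc]
        exact Nat.mul_le_mul_left _ (Nat.mul_le_mul_left _ hC.card_stabilizer_le)

end Setoid.IsPartition

/-- If `C` is a partition of `[n]` with `k` parts and `s` is the index of the
setwise stabiliser of `C` in `Sym(n)`, then `s ≥ C(n+1, k)/(n+1)`; in
particular `s ≥ C(n, k)/(n+1)` and `s ≥ C(n, min{k, n-k})/(n+1)`. -/
theorem stmt_10 (n : ℕ) (C : Set (Set (Fin n))) (hC : Setoid.IsPartition C)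
    (k : ℕ) (hk : C.ncard = k)
    (s : ℕ) (hs : s = (MulAction.stabilizer (Equiv.Perm (Fin n)) C).index) :
    (1 / (n + 1) : ℝ) * (n + 1).choose k ≤ s ∧
      (1 / (n + 1) : ℝ) * n.choose k ≤ s ∧
      (1 / (n + 1) : ℝ) * n.choose (min k (n - k)) ≤ s := by
  have hCk : Nat.card C = k := by rw [Nat.card_coe_set_eq, hk]
  have hkn : k ≤ n := by
    simpa [hCk] using hC.card_le
  have hbound : (n + 1).choose k ≤ (n + 1) * s := by
    simpa only [Fintype.card_fin, hCk, ← hs] using hC.choose_le_mul_index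
  have hreal : ∀ m : ℕ, m ≤ (n + 1) * s → (1 / (n + 1) : ℝ) * m ≤ s := fun m hm ↦ by
    rw [one_div, inv_mul_le_iff₀ (by positivity)]
    exact_mod_cast hm
  have hchoose : n.choose k ≤ (n + 1).choose k := choose_le_choose k n.le_succ
  have hmin : n.choose (min k (n - k)) = n.choose k := by
    rcases le_total k (n - k) with h | h
    · rw [min_eq_left h]
    · rw [min_eq_right h, choose_symm hkn]
  exact ⟨hreal _ hbound, hreal _ (hchoose.trans hbound),
    hreal _ (hmin ▸ hchoose.trans hbound)⟩
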